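/- arXiv:hep-th/9405116 — 3 statements merged into one kernel-verified Lean document; each statement's English description precedes it below -/
import Mathlib

section
/- The trace Tr on the algebra of integer-order pseudodifferential symbols over Laurent series, defined as Tr(Σ p_k(z)Dᵏ) = Res_{z=0} p_{-1}(z), vanishes on commutators: Tr(A∘B) = Tr(B∘A) for all symbols A, B of integer order. -/
noncomputable section

/-- Generalized binomial coefficient `binom(m, l)` for integer `m`. -/
def qbinom (m : ℤ) (l : ℕ) : ℚ :=
  (∏ i ∈ Finset.range l, ((m : ℚ) - (i : ℚ))) / (Nat.factorial l : ℚ)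

/-- Finite order condition for a symbol `Σ_{k ≤ N} p_k Dᵏ`. -/
def OrderBdd {R : Type*} [Zero R] (A : ℤ → R) : Prop := ∃ N : ℤ, ∀ k : ℤ, N < k → A k = 0

/-- Product of pseudodifferential symbols via `Dᵐ ∘ u = Σ binom(m,l) u^{(l)} D^{m-l}`. -/
def pdMul {R : Type*} [CommRing R] [Algebra ℚ R] (d : R → R) (A B : ℤ → R) : ℤ → R :=
  fun m => ∑ᶠ p : ℤ × ℕ, qbinom p.1 p.2 • (A p.1 * d^[p.2] (B (m - p.1 + (p.2 : ℤ))))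

/-- Formal derivative `d/dz` on Laurent polynomials `ℂ[z,z⁻¹]`. -/
def lder (f : LaurentPolynomial ℂ) : LaurentPolynomial ℂ :=
  Finsupp.sum (AddMonoidAlgebra.coeff f) fun n a =>
    (AddMonoidAlgebra.ofCoeff (Finsupp.single (n - 1) ((n : ℂ) * a)) : LaurentPolynomial ℂ)

/-- Residue at `z = 0`: the coefficient of `z⁻¹`. -/
def lres (f : LaurentPolynomial ℂ) : ℂ := (AddMonoidAlgebra.coeff f) (-1)

/-- Trace of a symbol: the residue of its coefficient `p_{-1}` of `D⁻¹`. -/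
def pdTr (A : ℤ → LaurentPolynomial ℂ) : ℂ := lres (A (-1))

/-! The `D⁻¹`-coefficient of `A ∘ B` is `Σ_{k,l} binom(k,l) A_k ∂ˡ B_{l-1-k}`. The residue kills
derivatives, so by the Leibniz rule `∂ˡ` may be moved from `B_{l-1-k}` onto `A_k` at the cost of
`(-1)ˡ`; the upper negation identity `binom(l-1-k, l) = (-1)ˡ binom(k, l)` then matches the term of
index `(k, l)` with the term of index `(l-1-k, l)` of `B ∘ A`. -/

lemma qbinom_eq_descPochhammer_eval (m : ℤ) (l : ℕ) :
    qbinom m l = (descPochhammer ℚ l).eval (m : ℚ) / l.factorial := by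
  rw [qbinom, descPochhammer_eval_eq_prod_range]

lemma qbinom_sub_one_sub (k : ℤ) (l : ℕ) : qbinom (l - 1 - k) l = (-1) ^ l * qbinom k l := by
  rw [qbinom_eq_descPochhammer_eval, qbinom_eq_descPochhammer_eval, mul_div_assoc',
    descPochhammer_eval_eq_ascPochhammer, ← ascPochhammer_eval_neg_eq_descPochhammer]
  congr 3
  push_cast
  ring

section IntegrationByParts

variable {R M : Type*} [NonUnitalNonAssocSemiring R] [AddCommGroup M] {d : R → R} {τ : R →+ M}

lemma map_mul_deriv_eq_neg (hleib : ∀ f g, d (f * g) = d f * g + f * d g)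
    (hτ : ∀ f, τ (d f) = 0) (f g : R) : τ (f * d g) = -τ (d f * g) := by
  rw [eq_neg_iff_add_eq_zero, add_comm, ← map_add, ← hleib, hτ]

lemma map_mul_iterate_deriv (hleib : ∀ f g, d (f * g) = d f * g + f * d g)
    (hτ : ∀ f, τ (d f) = 0) (l : ℕ) (f g : R) :
    τ (f * d^[l] g) = (-1 : ℤ) ^ l • τ (d^[l] f * g) := by
  induction l generalizing g with
  | zero => simp
  | succ l ih =>
    rw [Function.iterate_succ_apply, ih, map_mul_deriv_eq_neg hleib hτ,
      Function.iterate_succ_apply', pow_succ, mul_comm, mul_smul, neg_one_smul, smul_neg]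

end IntegrationByParts

section Symbols

variable {R : Type*} [CommRing R] [Algebra ℚ R] {d : R → R}

lemma support_pdMul_summand_finite (hd : d 0 = 0) {A B : ℤ → R} (hA : OrderBdd A)
    (hB : OrderBdd B) (m : ℤ) :
    (Function.support fun p : ℤ × ℕ =>
      qbinom p.1 p.2 • (A p.1 * d^[p.2] (B (m - p.1 + p.2)))).Finite := by
  obtain ⟨NA, hNA⟩ := hA
  obtain ⟨NB, hNB⟩ := hB
  refine (Finset.Icc (m - NB) NA ×ˢ Finset.range ((NA + NB - m).toNat + 1)).finite_toSet.subset ?_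
  rintro ⟨k, l⟩ hkl
  have hk : k ≤ NA := by
    by_contra! h
    simp [hNA k h] at hkl
  have hl : m - k + l ≤ NB := by
    by_contra! h
    simp [hNB _ h, Function.iterate_fixed hd] at hkl
  simp only [Finset.coe_product, Set.mem_prod, Finset.mem_coe, Finset.mem_Icc, Finset.mem_range]
  omega

/-- Matches the `D⁻¹`-terms of `A ∘ B` with those of `B ∘ A`. -/
def reflectIndex : Equiv.Perm (ℤ × ℕ) :=
  Function.Involutive.toPerm (fun p => ((p.2 : ℤ) - 1 - p.1, p.2)) fun p => by simp

@[simp]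
lemma reflectIndex_apply (p : ℤ × ℕ) : reflectIndex p = ((p.2 : ℤ) - 1 - p.1, p.2) := rfl

theorem map_pdMul_neg_one_comm {M : Type*} [AddCommGroup M] [Module ℚ M] (τ : R →+ M)
    (hleib : ∀ f g, d (f * g) = d f * g + f * d g) (hτ : ∀ f, τ (d f) = 0)
    {A B : ℤ → R} (hA : OrderBdd A) (hB : OrderBdd B) :
    τ (pdMul d A B (-1)) = τ (pdMul d B A (-1)) := by
  have hd : d 0 = 0 := by simpa using hleib 0 0
  rw [pdMul, pdMul, τ.map_finsum (support_pdMul_summand_finite hd hA hB _),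
    τ.map_finsum (support_pdMul_summand_finite hd hB hA _), ← finsum_comp_equiv reflectIndex]
  refine finsum_congr fun ⟨k, l⟩ => ?_
  have hB_index : -1 - ((l : ℤ) - 1 - k) + l = k := by ring
  have hA_index : -1 - k + l = (l : ℤ) - 1 - k := by ring
  rw [reflectIndex_apply, hB_index, hA_index, map_rat_smul, map_rat_smul, qbinom_sub_one_sub,
    map_mul_iterate_deriv hleib hτ l (B k), mul_comm (d^[l] _), mul_smul, smul_comm,
    ← Int.cast_smul_eq_zsmul ℚ]
  norm_num

end Symbols

section LaurentPolynomial

open AddMonoidAlgebra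

lemma lder_single (n : ℤ) (a : ℂ) : lder (single n a) = single (n - 1) (n * a) :=
  Finsupp.sum_single_index (by simp)

lemma lder_add (f g : LaurentPolynomial ℂ) : lder (f + g) = lder f + lder g :=
  Finsupp.sum_add_index' (by simp) fun _ _ _ => by
    rw [mul_add, Finsupp.single_add, ofCoeff_add]

lemma lder_mul (f g : LaurentPolynomial ℂ) : lder (f * g) = lder f * g + f * lder g := by
  induction f using AddMonoidAlgebra.induction_linear with
  | zero => simp [lder]
  | add f₁ f₂ h₁ h₂ => rw [add_mul, lder_add, lder_add, h₁, h₂]; ring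
  | single n a =>
    induction g using AddMonoidAlgebra.induction_linear with
    | zero => simp [lder]
    | add g₁ g₂ h₁ h₂ => rw [mul_add, lder_add, lder_add, h₁, h₂]; ring
    | single m b =>
      rw [single_mul_single, lder_single, lder_single, lder_single, single_mul_single,
        single_mul_single, show n - 1 + m = n + m - 1 by ring, show n + (m - 1) = n + m - 1 by ring,
        ← single_add]
      congr 1
      push_cast
      ring

def lresHom : LaurentPolynomial ℂ →+ ℂ where
  toFun := lres
  map_zero' := rfl
  map_add' _ _ := rfl

lemma lresHom_lder (f : LaurentPolynomial ℂ) : lresHom (lder f) = 0 := by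
  induction f using AddMonoidAlgebra.induction_linear with
  | zero => simp [lder]
  | add f g hf hg => rw [lder_add, map_add, hf, hg, add_zero]
  | single n a =>
    change lres _ = 0
    rw [lres, lder_single, coeff_single, Finsupp.single_apply]
    split_ifs with h
    · rw [show n = 0 by omega, Int.cast_zero, zero_mul]
    · rfl

end LaurentPolynomial

/-- the trace vanishes on commutators: `Tr(A∘B) = Tr(B∘A)`. -/
theorem pdTr_mul_comm (A B : ℤ → LaurentPolynomial ℂ)
    (hA : OrderBdd A) (hB : OrderBdd B) :
    pdTr (pdMul lder A B) = pdTr (pdMul lder B A) :=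
  map_pdMul_neg_one_comm lresHom lder_mul lresHom_lder hA hB

end
end

section
/- The bracket of log D with a symbol, defined by [log D, f(z)Dᵏ] = Σ_{ℓ≥1} ((-1)^{ℓ+1}/ℓ) f^{(ℓ)}(z) D^{k-ℓ}, is a derivation of the algebra of integer-order pseudodifferential symbols: [log D, A∘B] = [log D, A]∘B + A∘[log D, B]. -/
noncomputable section

/-- `[log D, ·]` : on a monomial `f Dᵏ` it is `Σ_{l≥1} ((-1)^{l+1}/l) f^{(l)} D^{k-l}`;
in terms of coefficient families, the coefficient of `Dᵐ` of `[log D, A]` is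
`Σ_{l≥1} ((-1)^{l+1}/l) d^l (A (m+l))`. -/
def adLog {R : Type*} [CommRing R] [Algebra ℚ R] (d : R → R) (A : ℤ → R) : ℤ → R :=
  fun m => ∑ᶠ l : ℕ, (if l = 0 then (0 : ℚ) else ((-1) ^ (l + 1) / l)) • d^[l] (A (m + l))

/-!
Fix the coefficient index `m`; the order bounds make every sum finite. Expanding
`dˡ (A p * dʲ B q)` by the Leibniz rule, the terms in which no derivative falls on `A p` are
exactly those of `A ∘ [log D, B]`. In the terms with `i ≥ 1` derivatives on `A p`, the
coefficient of `dⁱ (A p) * dˢ (B q)` is `Σ_{t+j=s} c (i+t) * C(i+t, i) * C(p, j)` with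
`c l = (-1)^(l+1)/l`. Since `c (i+t) * C(i+t, i) = c i * C(-i, t)`, Chu–Vandermonde turns it
into `c i * C(p-i, s)`, the coefficient of `[log D, A] ∘ B`.
-/

open Finset

theorem Finset.sum_range_sum_antidiagonal {M : Type*} [AddCommMonoid M] (T : ℕ)
    (f : ℕ → ℕ → M) (hf : ∀ i j, T < i + j → f i j = 0) :
    ∑ n ∈ range (T + 1), ∑ x ∈ antidiagonal n, f x.1 x.2
      = ∑ i ∈ range (T + 1), ∑ j ∈ range (T + 1), f i j := by
  rw [sum_sigma', ← sum_product']
  refine sum_bij_ne_zero (fun x _ _ => x.2) ?_ ?_ ?_ (fun _ _ _ => rfl)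
  · rintro ⟨n, i, j⟩ hx -
    simp only [mem_sigma, mem_range, HasAntidiagonal.mem_antidiagonal] at hx
    simp only [mem_product, mem_range]
    omega
  · rintro ⟨n, x⟩ hx - ⟨n', x'⟩ hx' - rfl
    simp only [mem_sigma, HasAntidiagonal.mem_antidiagonal] at hx hx'
    obtain rfl : n = n' := hx.2.symm.trans hx'.2
    rfl
  · rintro ⟨i, j⟩ hx hne
    refine ⟨⟨i + j, i, j⟩, ?_, ?_, rfl⟩
    · simp only [mem_sigma, mem_range, HasAntidiagonal.mem_antidiagonal, and_true]
      by_contra h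
      exact hne (hf i j (by omega))
    · exact hne

theorem Finset.sum_comp_add_right_of_support_subset {G M : Type*} [AddGroup G] [AddCommMonoid M]
    (f : G → M) (c : G) {P : Finset G} (h : Function.support f ⊆ P)
    (h' : Function.support (fun p => f (p + c)) ⊆ P) :
    ∑ p ∈ P, f (p + c) = ∑ p ∈ P, f p := by
  rw [← finsum_eq_sum_of_support_subset _ h, ← finsum_eq_sum_of_support_subset _ h']
  exact finsum_comp_equiv (Equiv.addRight c)

namespace Derivation

variable {S A : Type*} [CommSemiring S] [CommSemiring A] [Algebra S A] (d : Derivation S A A)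

theorem iterate_eq_pow (n : ℕ) : (⇑d)^[n] = ⇑((d : Module.End S A) ^ n) := by
  rw [Module.End.coe_pow, coeFn_coe]

theorem iterate_map_sum {ι : Type*} (n : ℕ) (s : Finset ι) (f : ι → A) :
    d^[n] (∑ i ∈ s, f i) = ∑ i ∈ s, d^[n] (f i) := by
  simp only [d.iterate_eq_pow, map_sum]

theorem iterate_map_smul (n : ℕ) (c : S) (a : A) : d^[n] (c • a) = c • d^[n] a := by
  simp only [d.iterate_eq_pow, LinearMap.map_smul]

theorem iterate_leibniz (n : ℕ) (a b : A) :
    d^[n] (a * b) = ∑ x ∈ antidiagonal n, n.choose x.1 • (d^[x.1] a * d^[x.2] b) := by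
  induction n with
  | zero => simp
  | succ n ih =>
    rw [Function.iterate_succ_apply', ih, map_sum,
      sum_antidiagonal_choose_succ_nsmul (fun i j => d^[i] a * d^[j] b), ← sum_add_distrib]
    refine sum_congr rfl fun x hx => ?_
    rw [map_nsmul, leibniz, Nat.choose_symm_of_eq_add (mem_antidiagonal.1 hx).symm,
      Function.iterate_succ_apply', Function.iterate_succ_apply', smul_add, smul_eq_mul,
      smul_eq_mul]
    ring

theorem sum_smul_iterate_mul (w : ℕ → ℕ → S) (a : A) (b : ℕ → A) (T : ℕ)
    (hb : ∀ n, T < n → b n = 0) :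
    ∑ l ∈ range (T + 1), ∑ j ∈ range (T + 1), w l j • d^[l] (a * d^[j] (b (l + j)))
      = ∑ i ∈ range (T + 1), ∑ t ∈ range (T + 1), ∑ j ∈ range (T + 1),
          (w (i + t) j * (i + t).choose i) • (d^[i] a * d^[t + j] (b (i + t + j))) := by
  calc _ = ∑ j ∈ range (T + 1), ∑ l ∈ range (T + 1), ∑ x ∈ antidiagonal l,
          (w (x.1 + x.2) j * (x.1 + x.2).choose x.1) •
            (d^[x.1] a * d^[x.2 + j] (b (x.1 + x.2 + j))) := by
        rw [sum_comm]
        refine sum_congr rfl fun j _ => sum_congr rfl fun l _ => ?_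
        rw [d.iterate_leibniz, smul_sum]
        refine sum_congr rfl fun x hx => ?_
        rw [HasAntidiagonal.mem_antidiagonal.1 hx, ← Nat.cast_smul_eq_nsmul S, smul_smul,
          Function.iterate_add_apply]
    _ = ∑ j ∈ range (T + 1), ∑ i ∈ range (T + 1), ∑ t ∈ range (T + 1),
          (w (i + t) j * (i + t).choose i) • (d^[i] a * d^[t + j] (b (i + t + j))) :=
        sum_congr rfl fun j _ => sum_range_sum_antidiagonal T (fun i t =>
          (w (i + t) j * (i + t).choose i) • (d^[i] a * d^[t + j] (b (i + t + j))))
          fun i t h => by rw [hb _ (by omega), iterate_map_zero, mul_zero, smul_zero]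
    _ = _ := by
        rw [sum_comm]; exact sum_congr rfl fun _ _ => sum_comm

end Derivation

theorem qbinom_eq_choose (m : ℤ) (l : ℕ) : qbinom m l = Ring.choose (m : ℚ) l := by
  rw [Ring.choose_eq_smul, ← Polynomial.aeval_eq_smeval, Polynomial.aeval_def,
    Polynomial.eval₂_eq_eval_map, descPochhammer_map, descPochhammer_eval_eq_prod_range,
    qbinom, smul_eq_mul, div_eq_inv_mul]

theorem qbinom_add (a b : ℤ) (s : ℕ) :
    qbinom (a + b) s = ∑ x ∈ antidiagonal s, qbinom a x.1 * qbinom b x.2 := by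
  simp only [qbinom_eq_choose, Int.cast_add]
  exact Ring.add_choose_eq s (Commute.all _ _)

theorem qbinom_neg_natCast_succ (n k : ℕ) :
    qbinom (-(n + 1 : ℕ)) k = (-1) ^ k * (n + k).choose k := by
  rw [qbinom_eq_choose, Int.cast_neg, Ring.choose_neg, Int.cast_natCast, Nat.cast_succ,
    add_right_comm, add_sub_cancel_right, ← Nat.cast_add, Ring.choose_natCast, Units.smul_def,
    zsmul_eq_mul, Int.coe_negOnePow_natCast]
  push_cast
  ring

-- The coefficient of `xˡ` in `log (1 + x)`.
def logCoeff (l : ℕ) : ℚ := if l = 0 then 0 else (-1) ^ (l + 1) / l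

theorem logCoeff_zero : logCoeff 0 = 0 := if_pos rfl

theorem logCoeff_add_mul_choose (n t : ℕ) :
    logCoeff (n + 1 + t) * (n + 1 + t).choose (n + 1)
      = logCoeff (n + 1) * ((-1) ^ t * (n + t).choose t) := by
  have h : ((n + t + 1 : ℕ) : ℚ) * (n + t).choose t = (n + 1 + t).choose (n + 1) * (n + 1) := by
    rw [← Nat.choose_symm_add, add_right_comm n 1 t]
    exact_mod_cast Nat.add_one_mul_choose_eq (n + t) n
  rw [logCoeff, logCoeff, if_neg (by omega), if_neg (by omega)]
  field_simp
  push_cast at h ⊢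
  linear_combination -(-1) ^ (n + t) * h

theorem sum_antidiagonal_logCoeff_mul_qbinom (n : ℕ) (p : ℤ) (s : ℕ) :
    ∑ x ∈ antidiagonal s, logCoeff (n + 1 + x.1) * qbinom p x.2 * (n + 1 + x.1).choose (n + 1)
      = logCoeff (n + 1) * qbinom (p - (n + 1 : ℕ)) s := by
  rw [sub_eq_neg_add, qbinom_add, mul_sum]
  refine sum_congr rfl fun x _ => ?_
  rw [mul_right_comm, logCoeff_add_mul_choose, qbinom_neg_natCast_succ]
  ring

section Symbols

variable {R : Type*} [CommRing R] [Algebra ℚ R] (d : Derivation ℚ R R)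

-- The coefficient of `D^(p+q)` in the theorem for `A = a Dᵖ` and `B = Σₙ (b n) D^(q+n)`.
theorem adLog_monomial_mul (p : ℤ) (a : R) (b : ℕ → R) (T : ℕ)
    (hb : ∀ n, T < n → b n = 0) :
    ∑ l ∈ range (T + 1), ∑ j ∈ range (T + 1),
        (logCoeff l * qbinom p j) • d^[l] (a * d^[j] (b (l + j)))
      = ∑ i ∈ range (T + 1), ∑ s ∈ range (T + 1),
          (logCoeff i * qbinom (p - i) s) • (d^[i] a * d^[s] (b (i + s)))
        + ∑ t ∈ range (T + 1), ∑ j ∈ range (T + 1),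
          (logCoeff t * qbinom p j) • (a * d^[t + j] (b (t + j))) := by
  have hzero : ∑ t ∈ range (T + 1), ∑ j ∈ range (T + 1),
      (logCoeff (0 + t) * qbinom p j * (0 + t).choose 0) • (d^[0] a * d^[t + j] (b (0 + t + j)))
      = ∑ t ∈ range (T + 1), ∑ j ∈ range (T + 1),
          (logCoeff t * qbinom p j) • (a * d^[t + j] (b (t + j))) := by
    simp only [zero_add, Nat.choose_zero_right, Nat.cast_one, mul_one, Function.iterate_zero_apply]
  have hsucc : ∀ i, ∑ t ∈ range (T + 1), ∑ j ∈ range (T + 1),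
      (logCoeff (i + 1 + t) * qbinom p j * (i + 1 + t).choose (i + 1)) •
        (d^[i + 1] a * d^[t + j] (b (i + 1 + t + j)))
      = ∑ s ∈ range (T + 1),
          (logCoeff (i + 1) * qbinom (p - (i + 1 : ℕ)) s) •
            (d^[i + 1] a * d^[s] (b (i + 1 + s))) := by
    intro i
    rw [← sum_range_sum_antidiagonal T (fun t j =>
      (logCoeff (i + 1 + t) * qbinom p j * (i + 1 + t).choose (i + 1)) •
        (d^[i + 1] a * d^[t + j] (b (i + 1 + t + j))))]
    · refine sum_congr rfl fun s _ => ?_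
      rw [← sum_antidiagonal_logCoeff_mul_qbinom, sum_smul]
      refine sum_congr rfl fun x hx => ?_
      rw [add_assoc (i + 1), HasAntidiagonal.mem_antidiagonal.1 hx]
    · intro t j h
      rw [hb _ (by omega), iterate_map_zero, mul_zero, smul_zero]
  rw [d.sum_smul_iterate_mul _ a b T hb, sum_range_succ', hzero, sum_congr rfl fun i _ => hsucc i]
  conv_rhs => rw [sum_range_succ']
  simp only [logCoeff_zero, zero_mul, zero_smul, sum_const_zero, add_zero]

variable {A B : ℤ → R} {NA NB : ℤ}

theorem adLog_eq_sum (hA : ∀ k, NA < k → A k = 0) {m : ℤ} {T : ℕ} (hT : NA - m ≤ T) :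
    adLog (⇑d) A m = ∑ l ∈ range (T + 1), logCoeff l • d^[l] (A (m + l)) := by
  refine finsum_eq_sum_of_support_subset _ fun l hl => ?_
  rw [coe_range, Set.mem_Iio]
  by_contra h
  exact hl (by dsimp only; rw [hA _ (by omega), iterate_map_zero, smul_zero])

theorem adLog_eq_zero_of_lt (hA : ∀ k, NA < k → A k = 0) {m : ℤ} (hm : NA < m) :
    adLog (⇑d) A m = 0 := by
  rw [adLog_eq_sum d hA (T := 0) (by omega), sum_range_one, logCoeff_zero, zero_smul]

theorem pdMul_eq_sum (hA : ∀ k, NA < k → A k = 0) (hB : ∀ k, NB < k → B k = 0) {m : ℤ}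
    {P : Finset ℤ} (hP : Icc (m - NB) NA ⊆ P) {T : ℕ} (hT : NA + NB - m ≤ T) :
    pdMul (⇑d) A B m
      = ∑ p ∈ P, ∑ j ∈ range (T + 1), qbinom p j • (A p * d^[j] (B (m - p + j))) := by
  rw [← sum_product']
  refine finsum_eq_sum_of_support_subset _ fun x hx => ?_
  obtain ⟨p, j⟩ := x
  have hp : p ≤ NA := by
    by_contra h
    exact hx (by dsimp only; rw [hA p (by omega), zero_mul, smul_zero])
  have hj : m - p + j ≤ NB := by
    by_contra h
    exact hx (by dsimp only; rw [hB (m - p + j) (by omega), iterate_map_zero, mul_zero, smul_zero])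
  simp only [coe_product, coe_range, Set.mem_prod, Finset.mem_coe, Set.mem_Iio]
  exact ⟨hP (mem_Icc.2 ⟨by omega, hp⟩), by omega⟩

theorem pdMul_eq_zero_of_lt (hA : ∀ k, NA < k → A k = 0) (hB : ∀ k, NB < k → B k = 0)
    {m : ℤ} (hm : NA + NB < m) : pdMul (⇑d) A B m = 0 := by
  rw [pdMul_eq_sum d hA hB (P := ∅) (fun p hp => by rw [mem_Icc] at hp; omega) (T := 0)
    (by omega), sum_empty]

theorem adLog_pdMul_eq_sum (hA : ∀ k, NA < k → A k = 0) (hB : ∀ k, NB < k → B k = 0)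
    {m : ℤ} {T : ℕ} (hT : NA + NB - m ≤ T) :
    adLog (⇑d) (pdMul (⇑d) A B) m
      = ∑ p ∈ Icc (m - NB) NA, ∑ l ∈ range (T + 1), ∑ j ∈ range (T + 1),
          (logCoeff l * qbinom p j) • d^[l] (A p * d^[j] (B (m - p + (l + j : ℕ)))) := by
  rw [adLog_eq_sum d (fun k => pdMul_eq_zero_of_lt d hA hB) hT, sum_comm]
  refine sum_congr rfl fun l hl => ?_
  rw [pdMul_eq_sum d hA hB (m := m + l) (P := Icc (m - NB) NA) (Icc_subset_Icc (by omega) le_rfl)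
    (T := T) (by omega), d.iterate_map_sum, smul_sum]
  refine sum_congr rfl fun p _ => ?_
  rw [d.iterate_map_sum, smul_sum]
  refine sum_congr rfl fun j _ => ?_
  rw [d.iterate_map_smul, smul_smul, show m + l - p + j = m - p + (l + j : ℕ) by push_cast; ring]

theorem pdMul_adLog_right_eq_sum (hA : ∀ k, NA < k → A k = 0) (hB : ∀ k, NB < k → B k = 0)
    {m : ℤ} {T : ℕ} (hT : NA + NB - m ≤ T) :
    pdMul (⇑d) A (adLog (⇑d) B) m
      = ∑ p ∈ Icc (m - NB) NA, ∑ t ∈ range (T + 1), ∑ j ∈ range (T + 1),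
          (logCoeff t * qbinom p j) • (A p * d^[t + j] (B (m - p + (t + j : ℕ)))) := by
  rw [pdMul_eq_sum d hA (fun k => adLog_eq_zero_of_lt d hB) subset_rfl hT]
  refine sum_congr rfl fun p hp => ?_
  rw [sum_comm]
  refine sum_congr rfl fun j hj => ?_
  rw [mem_Icc] at hp
  rw [adLog_eq_sum d hB (m := m - p + j) (T := T) (by omega), d.iterate_map_sum, mul_sum, smul_sum]
  refine sum_congr rfl fun t _ => ?_
  rw [d.iterate_map_smul, mul_smul_comm, smul_smul, ← Function.iterate_add_apply,
    add_comm j t, show m - p + j + t = m - p + (t + j : ℕ) by push_cast; ring,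
    mul_comm (qbinom p j)]

theorem pdMul_adLog_left_eq_sum (hA : ∀ k, NA < k → A k = 0) (hB : ∀ k, NB < k → B k = 0)
    {m : ℤ} {T : ℕ} (hT : NA + NB - m ≤ T) :
    pdMul (⇑d) (adLog (⇑d) A) B m
      = ∑ p ∈ Icc (m - NB) NA, ∑ i ∈ range (T + 1), ∑ s ∈ range (T + 1),
          (logCoeff i * qbinom (p - i) s) •
            (d^[i] (A p) * d^[s] (B (m - p + (i + s : ℕ)))) := by
  set g : ℕ → ℤ → R := fun i p => ∑ s ∈ range (T + 1),
    (logCoeff i * qbinom (p - i) s) • (d^[i] (A p) * d^[s] (B (m - p + (i + s : ℕ)))) with hg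
  have hsupp : ∀ i c, 0 ≤ c → c ≤ i →
      Function.support (fun p => g i (p + c)) ⊆ Icc (m - NB) NA := by
    intro i c hc hci p hp
    rw [coe_Icc, Set.mem_Icc]
    by_contra h
    refine hp (sum_eq_zero fun s _ => ?_)
    rcases not_and_or.1 h with h | h
    · rw [hB _ (by push_cast; omega), iterate_map_zero, mul_zero, smul_zero]
    · rw [hA _ (by omega), iterate_map_zero, zero_mul, smul_zero]
  calc _ = ∑ p ∈ Icc (m - NB) NA, ∑ i ∈ range (T + 1), g i (p + i) := by
        rw [pdMul_eq_sum d (fun k => adLog_eq_zero_of_lt d hA) hB subset_rfl hT]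
        refine sum_congr rfl fun p hp => ?_
        rw [mem_Icc] at hp
        simp only [hg, adLog_eq_sum d hA (m := p) (T := T) (by omega), sum_mul, smul_sum]
        rw [sum_comm]
        refine sum_congr rfl fun i _ => sum_congr rfl fun s _ => ?_
        rw [smul_mul_assoc, smul_smul, add_sub_cancel_right, mul_comm,
          show m - (p + i) + (i + s : ℕ) = m - p + s by push_cast; ring]
    _ = ∑ i ∈ range (T + 1), ∑ p ∈ Icc (m - NB) NA, g i p := by
        rw [sum_comm]
        refine sum_congr rfl fun i _ => ?_
        exact sum_comp_add_right_of_support_subset (g i) i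
          (by simpa using hsupp i 0 le_rfl (by omega)) (hsupp i i (by omega) le_rfl)
    _ = _ := sum_comm

end Symbols

/-- `ad_{log D}` is a derivation of the algebra of integer-order
pseudodifferential symbols over a differential field of characteristic 0:
`[log D, A∘B] = [log D, A]∘B + A∘[log D, B]`. -/
theorem adLog_derivation {K : Type*} [Field K] [CharZero K] (d : Derivation ℚ K K)
    (A B : ℤ → K) (hA : OrderBdd A) (hB : OrderBdd B) :
    adLog (⇑d) (pdMul (⇑d) A B)
      = fun m => pdMul (⇑d) (adLog (⇑d) A) B m + pdMul (⇑d) A (adLog (⇑d) B) m := by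
  obtain ⟨NA, hA⟩ := hA
  obtain ⟨NB, hB⟩ := hB
  funext m
  obtain ⟨T, hT⟩ : ∃ T : ℕ, NA + NB - m ≤ T := ⟨_, Int.self_le_toNat _⟩
  rw [adLog_pdMul_eq_sum d hA hB hT, pdMul_adLog_left_eq_sum d hA hB hT,
    pdMul_adLog_right_eq_sum d hA hB hT, ← sum_add_distrib]
  refine sum_congr rfl fun p hp => adLog_monomial_mul d p (A p) (fun n => B (m - p + n)) T
    fun n hn => hB _ ?_
  rw [mem_Icc] at hp
  omega
end
end

section
/- Each N-orbit of the gauge action T·(f + b) = T(f+b)T⁻¹ - T'T⁻¹ on first-order matrix differential operators d/dτ + f + b, where f is the n×n lower shift matrix and b ranges over upper triangular n×n matrices of functions, contains exactly one operator whose matrix is a Frobenius matrix (entries b₁,…,b_n in the first row, 1's on the subdiagonal, 0 elsewhere). -/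
noncomputable section

/-- The `n×n` lower shift matrix `f` (`1`'s at `(i+1, i)`). -/
def shiftM (n : ℕ) {R : Type*} [CommRing R] : Matrix (Fin n) (Fin n) R :=
  Matrix.of fun i j => if (i : ℕ) = (j : ℕ) + 1 then 1 else 0

/-- The Frobenius matrix: first row `c₁,…,c_n`, `1`'s on the subdiagonal, `0` elsewhere. -/
def frobM (n : ℕ) {R : Type*} [CommRing R] (c : Fin n → R) : Matrix (Fin n) (Fin n) R :=
  Matrix.of fun i j =>
    if (i : ℕ) = 0 then c j else if (i : ℕ) = (j : ℕ) + 1 then 1 else 0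

section DSAux

variable {R : Type*} [CommRing R] [Algebra ℚ R]

/-- The forced rows of the gauge matrix, from bottom (`k = 0`, row `n-1`) upward. -/
def dsRow (d : Derivation ℚ R R) (n : ℕ) (M : Matrix (Fin n) (Fin n) R) : ℕ → Fin n → R
  | 0 => fun j => if (j : ℕ) = n - 1 then 1 else 0
  | k + 1 => fun j => (∑ l, dsRow d n M k l * M l j) - d (dsRow d n M k j)

lemma dsRow_step (d : Derivation ℚ R R) (n : ℕ) (M : Matrix (Fin n) (Fin n) R)
    (k : ℕ) (j : Fin n) :
    dsRow d n M (k + 1) j = (∑ l, dsRow d n M k l * M l j) - d (dsRow d n M k j) := rfl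

lemma dsRow_spec (d : Derivation ℚ R R) (n : ℕ) (b : Matrix (Fin n) (Fin n) R)
    (hb : ∀ i j : Fin n, (j : ℕ) < (i : ℕ) → b i j = 0) :
    ∀ k, k ≤ n - 1 → ∀ j : Fin n,
      ((j : ℕ) < n - 1 - k → dsRow d n (shiftM n + b) k j = 0) ∧
      ((j : ℕ) = n - 1 - k → dsRow d n (shiftM n + b) k j = 1) := by
  intro k
  induction k with
  | zero =>
    intro _ j
    constructor
    · intro h; simp only [dsRow]; rw [if_neg (by omega)]
    · intro h; simp only [dsRow]; rw [if_pos (by omega)]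
  | succ k ih =>
    intro hk j
    have hk' : k ≤ n - 1 := by omega
    have ihs := ih hk'
    have main : ∀ (hjlt : (j : ℕ) < n - 1 - k) (hj1 : (j : ℕ) + 1 < n),
        dsRow d n (shiftM n + b) (k + 1) j
          = dsRow d n (shiftM n + b) k ⟨(j : ℕ) + 1, hj1⟩ := by
      intro hjlt hj1
      rw [dsRow_step]
      have hb0 : ∑ l, dsRow d n (shiftM n + b) k l * b l j = 0 := by
        refine Finset.sum_eq_zero fun l _ => ?_
        by_cases hl : (l : ℕ) < n - 1 - k
        · rw [(ihs l).1 hl, zero_mul]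
        · rw [hb l j (by omega), mul_zero]
      have hs : ∑ l, dsRow d n (shiftM n + b) k l * shiftM n l j
          = dsRow d n (shiftM n + b) k ⟨(j : ℕ) + 1, hj1⟩ := by
        rw [Finset.sum_eq_single (⟨(j : ℕ) + 1, hj1⟩ : Fin n)]
        · have : (shiftM n : Matrix (Fin n) (Fin n) R) (⟨(j : ℕ) + 1, hj1⟩ : Fin n) j = 1 := by
            simp [shiftM]
          rw [this, mul_one]
        · intro l _ hl
          have hln : (l : ℕ) ≠ (j : ℕ) + 1 := fun h => hl (Fin.ext h)
          have : (shiftM n : Matrix (Fin n) (Fin n) R) l j = 0 := by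
            simp [shiftM, hln]
          rw [this, mul_zero]
        · intro h; exact absurd (Finset.mem_univ _) h
      have hd : d (dsRow d n (shiftM n + b) k j) = 0 := by
        rw [(ihs j).1 hjlt, map_zero]
      simp only [Matrix.add_apply, mul_add, Finset.sum_add_distrib, hb0, hs, hd,
        add_zero, sub_zero]
    constructor
    · intro h
      have hjlt : (j : ℕ) < n - 1 - k := by omega
      have hj1 : (j : ℕ) + 1 < n := by omega
      rw [main hjlt hj1]
      exact (ihs ⟨(j : ℕ) + 1, hj1⟩).1 (by simpa using by omega)
    · intro h
      have hjlt : (j : ℕ) < n - 1 - k := by omega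
      have hj1 : (j : ℕ) + 1 < n := by omega
      rw [main hjlt hj1]
      exact (ihs ⟨(j : ℕ) + 1, hj1⟩).2 (by simpa using by omega)

end DSAux

/-- classical Drinfeld–Sokolov canonical form for `gl_n`: each orbit of the
gauge action `T·(f+b) = T(f+b)T⁻¹ - T'T⁻¹` of the group `N` of unitriangular matrices (of
functions) on operators `d/dτ + f + b` with `b` upper triangular contains exactly one
Frobenius operator. (The gauge relation is written multiplied through by `T` on the right.) -/
theorem drinfeld_sokolov_canonical_form {R : Type*} [CommRing R] [Algebra ℚ R]
    (d : Derivation ℚ R R) (n : ℕ) (hn : 0 < n)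
    (b : Matrix (Fin n) (Fin n) R) (hb : ∀ i j : Fin n, (j : ℕ) < (i : ℕ) → b i j = 0) :
    ∃! c : Fin n → R, ∃ T : Matrix (Fin n) (Fin n) R,
      (∀ i : Fin n, T i i = 1) ∧ (∀ i j : Fin n, (j : ℕ) < (i : ℕ) → T i j = 0) ∧
      T * (shiftM n + b) - Matrix.of (fun i j => d (T i j)) = frobM n c * T := by
  set M : Matrix (Fin n) (Fin n) R := shiftM n + b with hM
  set u : ℕ → Fin n → R := dsRow d n M with hu
  set T : Matrix (Fin n) (Fin n) R := Matrix.of (fun i j => u (n - 1 - (i : ℕ)) j) with hT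
  have spec := dsRow_spec d n b hb
  have hTapp : ∀ (i j : Fin n), T i j = u (n - 1 - (i : ℕ)) j := fun i j => rfl
  have hTdiag : ∀ i : Fin n, T i i = 1 := fun i =>
    (spec (n - 1 - (i : ℕ)) (by omega) i).2 (by omega)
  have hTlow : ∀ i j : Fin n, (j : ℕ) < (i : ℕ) → T i j = 0 := fun i j h =>
    (spec (n - 1 - (i : ℕ)) (by omega) j).1 (by omega)
  have hdet : IsUnit T.det := by
    have hbt : T.BlockTriangular id := fun i j hij => hTlow i j hij
    rw [Matrix.det_of_upperTriangular hbt]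
    simp only [hTdiag, Finset.prod_const_one]
    exact isUnit_one
  have hTinv : T⁻¹ * T = 1 := Matrix.nonsing_inv_mul T hdet
  have hTinv' : T * T⁻¹ = 1 := Matrix.mul_nonsing_inv T hdet
  set r : Fin n → R := u (n - 1 + 1) with hr
  set c : Fin n → R := Matrix.vecMul r T⁻¹ with hc
  have hcT : Matrix.vecMul c T = r := by
    rw [hc, Matrix.vecMul_vecMul, hTinv, Matrix.vecMul_one]
  -- rows of `frobM c' * T'`
  have frob0 : ∀ (c' : Fin n → R) (T' : Matrix (Fin n) (Fin n) R) (i : Fin n) (j : Fin n),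
      (i : ℕ) = 0 → (frobM n c' * T') i j = Matrix.vecMul c' T' j := by
    intro c' T' i j hi
    rw [Matrix.mul_apply]
    simp [frobM, hi, Matrix.vecMul, dotProduct]
  have frob1 : ∀ (c' : Fin n → R) (T' : Matrix (Fin n) (Fin n) R) (i : Fin n) (j : Fin n)
      (hi : (i : ℕ) ≠ 0),
      (frobM n c' * T') i j = T' ⟨(i : ℕ) - 1, by omega⟩ j := by
    intro c' T' i j hi
    rw [Matrix.mul_apply, Finset.sum_eq_single (⟨(i : ℕ) - 1, by omega⟩ : Fin n)]
    · have : frobM n c' i (⟨(i : ℕ) - 1, by omega⟩ : Fin n) = 1 := by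
        simp only [frobM, Matrix.of_apply]
        rw [if_neg hi, if_pos (show (i : ℕ) = (i : ℕ) - 1 + 1 by omega)]
      rw [this, one_mul]
    · intro l _ hl
      have hln : (i : ℕ) ≠ (l : ℕ) + 1 := by
        intro h; exact hl (Fin.ext (show (l : ℕ) = (i : ℕ) - 1 by omega))
      have : frobM n c' i l = 0 := by
        simp only [frobM, Matrix.of_apply]
        rw [if_neg hi, if_neg hln]
      rw [this, zero_mul]
    · intro h; exact absurd (Finset.mem_univ _) h
  -- rows of the left-hand side for T
  have hLrow : ∀ (i j : Fin n),
      (T * M - Matrix.of (fun i j => d (T i j))) i j = u (n - 1 - (i : ℕ) + 1) j := by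
    intro i j
    rw [Matrix.sub_apply, Matrix.mul_apply]
    simp only [hTapp, Matrix.of_apply]
    rw [hu, dsRow_step]
  -- existence: equation for T, c
  have heqT : T * M - Matrix.of (fun i j => d (T i j)) = frobM n c * T := by
    ext i j
    rw [hLrow i j]
    by_cases hi : (i : ℕ) = 0
    · rw [frob0 c T i j hi, hcT]
      have : n - 1 - (i : ℕ) + 1 = n - 1 + 1 := by omega
      rw [this]
    · rw [frob1 c T i j hi, hTapp]
      have : n - 1 - (i : ℕ) + 1 = n - 1 - ((i : ℕ) - 1) := by omega
      rw [this]
  refine ⟨c, ⟨T, hTdiag, hTlow, heqT⟩, ?_⟩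
  rintro c' ⟨T', h1, h2, heq⟩
  -- T' is forced to equal T, row by row from the bottom
  have claim : ∀ k, k ≤ n - 1 → ∀ i : Fin n, (i : ℕ) = n - 1 - k → ∀ j, T' i j = u k j := by
    intro k
    induction k with
    | zero =>
      intro _ i hi j
      by_cases hj : (j : ℕ) = n - 1
      · have hij : j = i := Fin.ext (by omega)
        subst hij
        rw [h1, hu]
        simp only [dsRow]; rw [if_pos hj]
      · rw [h2 i j (by omega), hu]
        simp only [dsRow]; rw [if_neg hj]
    | succ k ih =>
      intro hk i hi j
      have hk' : k ≤ n - 1 := by omega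
      have hmlt : n - 1 - k < n := by omega
      have hm1 : (⟨n - 1 - k, hmlt⟩ : Fin n).val ≠ 0 := by simp; omega
      have hrow := congrFun (congrFun heq (⟨n - 1 - k, hmlt⟩ : Fin n)) j
      rw [frob1 c' T' _ j hm1, Matrix.sub_apply, Matrix.mul_apply] at hrow
      have hTm : ∀ l, T' (⟨n - 1 - k, hmlt⟩ : Fin n) l = u k l :=
        ih hk' ⟨n - 1 - k, hmlt⟩ rfl
      simp only [hTm, Matrix.of_apply] at hrow
      have hieq : i = (⟨(⟨n - 1 - k, hmlt⟩ : Fin n).val - 1, by omega⟩ : Fin n) :=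
        Fin.ext (by simp; omega)
      rw [hieq, ← hrow, hu]
      exact (dsRow_step d n M k j).symm
  have hT'T : T' = T := by
    ext i j
    rw [hTapp, claim (n - 1 - (i : ℕ)) (by omega) i (by omega) j]
  -- conclude c' = c
  rw [hT'T] at heq
  have hrow0 : Matrix.vecMul c' T = r := by
    funext j
    have h0 := congrFun (congrFun heq (⟨0, hn⟩ : Fin n)) j
    rw [hLrow, frob0 c' T _ j rfl] at h0
    rw [← h0]; rfl
  calc c' = Matrix.vecMul c' (T * T⁻¹) := by rw [hTinv', Matrix.vecMul_one]
    _ = Matrix.vecMul (Matrix.vecMul c' T) T⁻¹ := by rw [Matrix.vecMul_vecMul]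
    _ = c := by rw [hrow0, hc]
end
end
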